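/- There exists a finite deterministic MDP, a policy π, a leaf evaluation u = V^π, and a finite-horizon π-consistent (but non-monotonic) choice function ψ such that the online policy π' = Π^ψ_u satisfies V^{π'}(s) < V^π(s) for some state s. Hence π-consistency alone does not imply π-safety. -/

import Mathlib

open Finset

/-- A finite Markov Decision Process with transition kernel `P` and reward `R`. -/
structure MDP (S A : Type) [Fintype S] where
  P : S → A → S → ℝ
  R : S → A → ℝ
  P_nonneg : ∀ s a s', 0 ≤ P s a s'
  P_sum : ∀ s a, ∑ s', P s a s' = 1

/-- A state path: a root state followed by an alternating list of actions and states. -/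
abbrev SPath (S A : Type) := S × List (A × S)

variable {S A : Type}

/-- The current (last) state of a path. -/
def curS (p : SPath S A) : S := (p.2.getLast?.map Prod.snd).getD p.1

/-- Extend a path by an action and a successor state. -/
def extP (p : SPath S A) (a : A) (s' : S) : SPath S A := (p.1, p.2 ++ [(a, s')])

/-- Remove the first state-action pair of a path (identity on length-0 paths). -/
def dropFirst (p : SPath S A) : SPath S A :=
  match p with
  | (s₀, []) => (s₀, [])
  | (_, (_, s₁) :: rest) => (s₁, rest)

/-- The length-zero path consisting of a single root state. -/
def rootP (s : S) : SPath S A := (s, ([] : List (A × S)))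

/-- `p` is ψ-satisfying: every action along the path is allowed by ψ at the
corresponding prefix. -/
def SatCF (ψ : SPath S A → Finset A) (p : SPath S A) : Prop :=
  ∀ n (h : n < p.2.length), (p.2.get ⟨n, h⟩).1 ∈ ψ (p.1, p.2.take n)

/-- ψ is π-consistent: π's action is allowed at every non-leaf node. -/
def ConsistentCF (ψ : SPath S A → Finset A) (π : S → A) : Prop :=
  ∀ p, (ψ p).Nonempty → π (curS p) ∈ ψ p

/-- ψ is monotonic: `ψ(p;s) ⊆ ψ(⌟p;s)`. -/
def MonoCF (ψ : SPath S A → Finset A) : Prop :=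
  ∀ p : SPath S A, ψ p ⊆ ψ (dropFirst p)

/-- ψ has horizon at most H: every ψ-satisfying path of length ≥ H is a leaf. -/
def HorizonLE (ψ : SPath S A → Finset A) (H : ℕ) : Prop :=
  ∀ p : SPath S A, SatCF ψ p → H ≤ p.2.length → ψ p = ∅

/-- every leaf path of ψ has length at least h (min-horizon lower bound). -/
def MinLeaf (ψ : SPath S A → Finset A) (h : ℕ) : Prop :=
  ∀ p : SPath S A, SatCF ψ p → ψ p = ∅ → h ≤ p.2.length

variable [Fintype S] [Fintype A]

/-- Tree value with explicit fuel (remaining depth). -/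
noncomputable def treeVal (M : MDP S A) (γ : ℝ) (ψ : SPath S A → Finset A)
    (u : S → ℝ) : ℕ → SPath S A → ℝ
  | 0, p => u (curS p)
  | n + 1, p =>
      if h : (ψ p).Nonempty then
        (ψ p).sup' h fun a =>
          M.R (curS p) a + γ * ∑ s', M.P (curS p) a s' * treeVal M γ ψ u n (extP p a s')
      else u (curS p)

/-- `V^ψ_u(p;s)` for a choice function ψ of horizon H. -/
noncomputable def Vt (M : MDP S A) (γ : ℝ) (ψ : SPath S A → Finset A)
    (u : S → ℝ) (H : ℕ) (p : SPath S A) : ℝ :=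
  treeVal M γ ψ u (H - p.2.length) p

/-- `Q^ψ_u(s;a)` at a root node. -/
noncomputable def QrootCF (M : MDP S A) (γ : ℝ) (ψ : SPath S A → Finset A)
    (u : S → ℝ) (H : ℕ) (s : S) (a : A) : ℝ :=
  M.R s a + γ * ∑ s', M.P s a s' * Vt M γ ψ u H (extP (rootP s) a s')

/-- π' is a greedy root policy for the search tree of ψ with leaf evaluation u. -/
def IsGreedy (M : MDP S A) (γ : ℝ) (ψ : SPath S A → Finset A)
    (u : S → ℝ) (H : ℕ) (π' : S → A) : Prop :=
  ∀ s, π' s ∈ ψ (rootP s) ∧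
    ∀ a ∈ ψ (rootP s), QrootCF M γ ψ u H s a ≤ QrootCF M γ ψ u H s (π' s)

/-- `V` is the value function of the stationary policy π. -/
def IsValue (M : MDP S A) (γ : ℝ) (π : S → A) (V : S → ℝ) : Prop :=
  ∀ s, V s = M.R s (π s) + γ * ∑ s', M.P s (π s) s' * V s'

/-- Policy-restricted Bellman backup `B_π[V](s)`. -/
noncomputable def Bpol (M : MDP S A) (γ : ℝ) (π : S → A) (V : S → ℝ) (s : S) : ℝ :=
  M.R s (π s) + γ * ∑ s', M.P s (π s) s' * V s'


namespace MDP

omit [Fintype A]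

variable [DecidableEq S]

noncomputable def ofNext (next : S → A → S) (R : S → A → ℝ) : MDP S A where
  P s a t := if t = next s a then 1 else 0
  R := R
  P_nonneg s a t := by split_ifs <;> norm_num
  P_sum s a := by simp

variable {next : S → A → S} {R : S → A → ℝ}

@[simp]
theorem ofNext_R : (ofNext next R).R = R := rfl

theorem sum_P_ofNext_mul (s : S) (a : A) (f : S → ℝ) :
    ∑ t, (ofNext next R).P s a t * f t = f (next s a) := by
  simp [ofNext]

theorem isDeterministic_ofNext (s : S) (a : A) :
    ∃ s', ∀ t, (ofNext next R).P s a t = if t = s' then 1 else 0 :=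
  ⟨next s a, fun _ => rfl⟩

theorem isValue_ofNext_iff {γ : ℝ} {π : S → A} {V : S → ℝ} :
    IsValue (ofNext next R) γ π V ↔ ∀ s, V s = R s (π s) + γ * V (next s (π s)) := by
  simp only [IsValue, sum_P_ofNext_mul, ofNext_R]

end MDP

section SearchTree

omit [Fintype A]

omit [Fintype S] in
@[simp]
theorem curS_extP (p : SPath S A) (a : A) (s' : S) : curS (extP p a s') = s' := by
  simp [curS, extP]

variable [DecidableEq S] {next : S → A → S} {R : S → A → ℝ}
  {γ : ℝ} {ψ : SPath S A → Finset A} {u : S → ℝ}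

theorem treeVal_one_ofNext {p : SPath S A} {s : Finset A} (hψ : ψ p = s) (hs : s.Nonempty) :
    treeVal (MDP.ofNext next R) γ ψ u 1 p =
      s.sup' hs fun a => R (curS p) a + γ * u (next (curS p) a) := by
  subst hψ
  simp only [treeVal, dif_pos hs, MDP.sum_P_ofNext_mul, MDP.ofNext_R, curS_extP]

theorem QrootCF_ofNext (H : ℕ) (s : S) (a : A) :
    QrootCF (MDP.ofNext next R) γ ψ u (H + 1) s a =
      R s a + γ * treeVal (MDP.ofNext next R) γ ψ u H (extP (rootP s) a (next s a)) := by
  simp only [QrootCF, Vt, MDP.sum_P_ofNext_mul]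
  rfl

end SearchTree

/- Action `0` stays put and action `1` moves `0 → 1 → 2 → 2`. Staying at `0` earns `1` per
step, worth `2` under `γ = 1/2`, and action `1` at state `1` earns `10`. From root `0` the
depth-two search sees that reward through action `1` (`Q = 5 > 2`), but ψ is not monotonic:
at root `1` it prunes action `1`, which it allowed one level deeper. So the online policy walks
to `1` and stays there forever, earning nothing. -/
namespace PruningCounterexample

def next (s a : Fin 3) : Fin 3 := if a = 1 then (if s = 0 then 1 else 2) else s

noncomputable def reward (s a : Fin 3) : ℝ :=
  if a = 1 then (if s = 1 then 10 else 0) else (if s = 0 then 1 else 0)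

def ψ (p : SPath (Fin 3) (Fin 3)) : Finset (Fin 3) :=
  match p.2.length with
  | 0 => if p.1 = 0 then {0, 1} else {0}
  | 1 => {0, 1}
  | _ => ∅

def stay : Fin 3 → Fin 3 := fun _ => 0

def online : Fin 3 → Fin 3 := fun s => if s = 0 then 1 else 0

noncomputable def vStay : Fin 3 → ℝ := fun s => if s = 0 then 2 else 0

theorem isValue_stay : IsValue (MDP.ofNext next reward) (1 / 2) stay vStay := by
  rw [MDP.isValue_ofNext_iff]
  intro s
  fin_cases s <;> norm_num [vStay, reward, next, stay]

theorem isValue_online : IsValue (MDP.ofNext next reward) (1 / 2) online 0 := by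
  rw [MDP.isValue_ofNext_iff]
  intro s
  fin_cases s <;> norm_num [reward, next, online]

theorem horizonLE_ψ : HorizonLE ψ 2 := by
  intro p _ hlen
  obtain ⟨n, hn⟩ := Nat.exists_eq_add_of_le' hlen
  simp [ψ, hn]

theorem consistentCF_ψ_stay : ConsistentCF ψ stay := by
  intro p hne
  rcases hlen : p.2.length with _ | _ | n <;> simp only [ψ, hlen] at hne ⊢
  · split_ifs <;> simp [stay]
  · simp [stay]
  · exact absurd hne Finset.not_nonempty_empty

theorem QrootCF_eq (s a : Fin 3) :
    QrootCF (MDP.ofNext next reward) (1 / 2) ψ vStay 2 s a =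
      reward s a + 1 / 2 * max (reward (next s a) 0 + 1 / 2 * vStay (next (next s a) 0))
        (reward (next s a) 1 + 1 / 2 * vStay (next (next s a) 1)) := by
  have hψ : ψ (extP (rootP s) a (next s a)) = {0, 1} := rfl
  rw [QrootCF_ofNext, treeVal_one_ofNext hψ (insert_nonempty _ _),
    sup'_insert (H := singleton_nonempty 1), sup'_singleton, curS_extP]

theorem isGreedy_online : IsGreedy (MDP.ofNext next reward) (1 / 2) ψ vStay 2 online := by
  intro s
  fin_cases s
  · refine ⟨by decide, fun a ha => ?_⟩
    have ha : a = 0 ∨ a = 1 := by simpa [ψ, rootP] using ha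
    rcases ha with rfl | rfl <;> norm_num [QrootCF_eq, reward, next, vStay, online, Fin.ext_iff]
  all_goals
    refine ⟨by decide, fun a ha => ?_⟩
    obtain rfl : a = 0 := by simpa [ψ, rootP] using ha
    rfl

end PruningCounterexample

/-- Counter-example: there is a finite deterministic MDP, base policy π with
value `V^π`, and a finite-horizon π-consistent (non-monotonic) choice function
ψ with leaf evaluation `u = V^π` whose greedy online policy π' is strictly
worse than π at some state: π-consistency alone does not imply π-safety. -/
theorem stmt_18 :
    ∃ (M : MDP (Fin 3) (Fin 3)) (γ : ℝ) (π : Fin 3 → Fin 3) (Vpi : Fin 3 → ℝ)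
      (H : ℕ) (ψ : SPath (Fin 3) (Fin 3) → Finset (Fin 3))
      (π' : Fin 3 → Fin 3) (Vpi' : Fin 3 → ℝ) (s : Fin 3),
      0 < γ ∧ γ < 1 ∧
      (∀ s a, ∃ s', ∀ t, M.P s a t = if t = s' then 1 else 0) ∧
      IsValue M γ π Vpi ∧
      HorizonLE ψ H ∧
      ConsistentCF ψ π ∧
      IsGreedy M γ ψ Vpi H π' ∧
      IsValue M γ π' Vpi' ∧
      Vpi' s < Vpi s :=
  open PruningCounterexample in
  ⟨MDP.ofNext next reward, 1 / 2, stay, vStay, 2, ψ, online, 0, 0, by norm_num, by norm_num,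
    MDP.isDeterministic_ofNext, isValue_stay, horizonLE_ψ, consistentCF_ψ_stay, isGreedy_online,
    isValue_online, by norm_num [vStay]⟩
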